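/- Let G, H be TSI Polish groups, S : G → H a continuous homomorphism, and U ∋ 1_G an open subset of G such that the restriction S↾U : U → S(U) is a homeomorphism. Then for all x, y ∈ G^ω with lim_p x(p)y(p)^{-1} = 1_G (equivalently d_G(x(p),y(p)) → 0 for a two-sided invariant metric d_G), the sequence (x(0)···x(n)y(n)^{-1}···y(0)^{-1})_n converges in G if and only if (S(x(0))···S(x(n))S(y(n))^{-1}···S(y(0))^{-1})_n converges in H. -/

import Mathlib

/-!
A compatible two-sided invariant metric `d` on a Polish group `G` is complete: `(G, d)` is a
uniform group, so its completion is a group in which `G` is a dense subgroup; `G` is Gδ there,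
being completely metrizable, and by Baire's theorem it meets each of its translates, so it is the
whole completion.

Write `z n = x(0)⋯x(n)·y(n)⁻¹⋯y(0)⁻¹`. By invariance `d(z (n+1), z n) = d(x(n+1) y(n+1)⁻¹, 1) → 0`,
and `d(z m, z n) = d(z m / z n, 1)`, both in `G` and in `H`. If `S ∘ z` is Cauchy, fix `N` large:
as long as `z m` is `2ε`-close to `z N`, the element `z m / z N` lies in `U` and `S` maps it close
to `1`, so, `S` being an embedding on `U`, it is in fact `ε`-close to `1`. Since the steps of `z`
are eventually shorter than `ε`, the sequence can never cross from the `ε`-ball around `z N` to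
outside the `2ε`-ball, hence stays in the `ε`-ball. So `z` is Cauchy and converges.
-/

open Filter Topology

/-- A Polish group is TSI if it admits a compatible two-sided invariant metric. -/
def IsTSI (G : Type*) [Group G] [t : TopologicalSpace G] : Prop :=
  ∃ m : MetricSpace G, m.toUniformSpace.toTopologicalSpace = t ∧
    (∀ g h k : G, @dist G m.toDist (g * h) (g * k) = @dist G m.toDist h k) ∧
    (∀ g h k : G, @dist G m.toDist (h * g) (k * g) = @dist G m.toDist h k)

/-- The partial product `x(0) ⋯ x(n)`. -/
def partialProd {G : Type*} [Monoid G] (x : ℕ → G) (n : ℕ) : G :=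
  ((List.range (n + 1)).map x).prod

open Set Metric

theorem Topology.IsEmbedding.isGδ_range {T X : Type*} [TopologicalSpace T]
    [TopologicalSpace.IsCompletelyMetrizableSpace T] [TopologicalSpace X] [T2Space X]
    [PerfectlyNormalSpace X] {f : T → X} (hf : IsEmbedding f) : IsGδ (range f) := by
  let := TopologicalSpace.upgradeIsCompletelyMetrizable T
  -- `P ε` is the set of points near which `f⁻¹` oscillates by less than `ε`
  set P : ℝ → Set X := fun ε => {x | ∃ t ∈ comap f (𝓝 x), ∀ a ∈ t, ∀ b ∈ t, dist a b < ε}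
  have hP_open (ε : ℝ) : IsOpen (P ε) := by
    refine isOpen_iff_mem_nhds.2 fun x ⟨t, ht, hsmall⟩ => ?_
    obtain ⟨V, hV, hVt⟩ := mem_comap.1 ht
    filter_upwards [eventually_mem_nhds_iff.2 hV] with y hy
    exact ⟨t, mem_comap.2 ⟨V, hy, hVt⟩, hsmall⟩
  have range_subset (ε : ℝ) (hε : 0 < ε) : range f ⊆ P ε := by
    rintro _ ⟨a, rfl⟩
    refine ⟨ball a (ε / 2), hf.isInducing.nhds_eq_comap a ▸ ball_mem_nhds a (half_pos hε),
      fun b hb c hc => ?_⟩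
    linarith [dist_triangle_right b c a, mem_ball.1 hb, mem_ball.1 hc]
  have subset_range : closure (range f) ∩ ⋂ n : ℕ, P (1 / (n + 1)) ⊆ range f := by
    rintro x ⟨hx, hxP⟩
    have : (comap f (𝓝 x)).NeBot := comap_neBot_iff_frequently.2 (mem_closure_iff_frequently.1 hx)
    have hcauchy : Cauchy (comap f (𝓝 x)) := by
      refine Metric.cauchy_iff.2 ⟨this, fun ε hε => ?_⟩
      obtain ⟨n, hn⟩ := exists_nat_one_div_lt hε
      obtain ⟨t, ht, hsmall⟩ := mem_iInter.1 hxP n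
      exact ⟨t, ht, fun a ha b hb => (hsmall a ha b hb).trans hn⟩
    obtain ⟨c, hc⟩ := CompleteSpace.complete hcauchy
    exact ⟨c, tendsto_nhds_unique ((hf.continuous.tendsto c).mono_left hc) tendsto_comap⟩
  have hrange : range f = closure (range f) ∩ ⋂ n : ℕ, P (1 / (n + 1)) :=
    (subset_inter subset_closure fun _ hx => mem_iInter.2 fun _ =>
      range_subset _ Nat.one_div_pos_of_nat hx).antisymm subset_range
  rw [hrange]
  exact isClosed_closure.isGδ.inter (.iInter_of_isOpen fun n => hP_open _)

@[to_additive]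
theorem Subgroup.eq_top_of_dense_of_isGδ {G : Type*} [Group G] [TopologicalSpace G]
    [SeparatelyContinuousMul G] [BaireSpace G] {K : Subgroup G} (hd : Dense (K : Set G))
    (hK : IsGδ (K : Set G)) : K = ⊤ := by
  refine eq_top_iff.2 fun g _ => ?_
  let e := Homeomorph.mulLeft g⁻¹
  obtain ⟨w, hgw : g⁻¹ * w ∈ K, hw⟩ := (Dense.inter_of_Gδ (hK.preimage e.continuous) hK
    (hd.preimage e.isOpenMap) hd).nonempty
  simpa using K.mul_mem hw (K.inv_mem hgw)

@[to_additive]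
theorem isUniformGroup_of_isIsometricSMul {G : Type*} [Group G] [PseudoMetricSpace G]
    [IsIsometricSMul G G] [IsIsometricSMul Gᵐᵒᵖ G] : IsUniformGroup G := by
  refine ⟨(LipschitzWith.of_dist_le_mul fun p q => ?_ : LipschitzWith 2 _).uniformContinuous⟩
  calc dist (p.1 / p.2) (q.1 / q.2) ≤ dist (p.1 / p.2) (q.1 / p.2) + dist (q.1 / p.2) (q.1 / q.2) :=
        dist_triangle _ _ _
    _ = dist p.1 q.1 + dist p.2 q.2 := by rw [dist_div_right, dist_div_left]
    _ ≤ 2 * dist p q := by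
        rw [two_mul, Prod.dist_eq]; exact add_le_add (le_max_left _ _) (le_max_right _ _)

open UniformSpace in
theorem completeSpace_of_isIsometricVAdd {G : Type*} [AddGroup G] [MetricSpace G]
    [TopologicalSpace.IsCompletelyMetrizableSpace G] [IsIsometricVAdd G G]
    [IsIsometricVAdd Gᵃᵒᵖ G] : CompleteSpace G := by
  have := isUniformAddGroup_of_isIsometricVAdd (G := G)
  have hsurj : Function.Surjective (Completion.toCompl : G →+ Completion G) := by
    refine AddMonoidHom.range_eq_top.1 (AddSubgroup.eq_top_of_dense_of_isGδ ?_ ?_) <;>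
      rw [AddMonoidHom.coe_range]
    · exact Completion.denseRange_coe
    · exact Completion.coe_isometry.isEmbedding.isGδ_range
  exact ((Completion.isUniformInducing_coe G).completeSpace_congr hsurj).2 inferInstance

theorem completeSpace_of_isIsometricSMul {G : Type*} [Group G] [MetricSpace G]
    [TopologicalSpace.IsCompletelyMetrizableSpace G] [IsIsometricSMul G G]
    [IsIsometricSMul Gᵐᵒᵖ G] : CompleteSpace G :=
  -- the instances are given by hand: Mathlib's ones on `Additive G` go through a different
  -- (defeq, but not reducibly so) path to the metric of `Additive G`
  @completeSpace_of_isIsometricVAdd (Additive G) _ _ ‹_› ⟨fun c => isometry_smul G c.toMul⟩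
    ⟨fun c => isometry_smul G (MulOpposite.op c.unop.toMul)⟩

theorem comap_nhds_inf_principal_eq_nhdsWithin {X Y : Type*} [TopologicalSpace X]
    [TopologicalSpace Y] {f : X → Y} {U : Set X} (hf : IsEmbedding fun x : U => f x) {a : X}
    (ha : a ∈ U) : comap f (𝓝 (f a)) ⊓ 𝓟 U = 𝓝[U] a := by
  rw [nhdsWithin_eq_map_subtype_coe ha, hf.isInducing.nhds_eq_comap]
  change _ = map Subtype.val (comap (f ∘ Subtype.val) _)
  rw [← comap_comap, map_comap, Subtype.range_coe]

theorem dist_lt_of_dist_succ_lt_of_gap {X : Type*} [PseudoMetricSpace X] {z : ℕ → X} {N : ℕ}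
    {ε : ℝ} (hstep : ∀ n ≥ N, dist (z (n + 1)) (z n) < ε)
    (hgap : ∀ n ≥ N, dist (z n) (z N) < 2 * ε → dist (z n) (z N) < ε) :
    ∀ n ≥ N, dist (z n) (z N) < ε := by
  intro n hn
  induction n, hn using Nat.le_induction with
  | base => simpa using (dist_nonneg.trans_lt (hstep N le_rfl))
  | succ n hn ih =>
    refine hgap (n + 1) (by omega) ?_
    linarith [dist_triangle (z (n + 1)) (z n) (z N), hstep n hn]

theorem dist_div_one {G : Type*} [Group G] [PseudoMetricSpace G] [IsIsometricSMul Gᵐᵒᵖ G]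
    (a b : G) : dist (a / b) 1 = dist a b := by
  rw [← div_self' b, dist_div_right]

theorem cauchySeq_of_cauchySeq_map {G H : Type*} [Group G] [PseudoMetricSpace G]
    [IsIsometricSMul Gᵐᵒᵖ G] [Group H] [PseudoMetricSpace H] [IsIsometricSMul Hᵐᵒᵖ H]
    (S : G →* H) {U : Set G} (hU : U ∈ 𝓝 1) (hSU : comap S (𝓝 1) ⊓ 𝓟 U ≤ 𝓝 1) {z : ℕ → G}
    (hz : Tendsto (fun n => dist (z (n + 1)) (z n)) atTop (𝓝 0))
    (hSz : CauchySeq fun n => S (z n)) : CauchySeq z := by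
  obtain ⟨r, hr, hrU⟩ := Metric.mem_nhds_iff.1 hU
  refine Metric.cauchySeq_iff'.2 fun ε hε => ?_
  set η := min ε (r / 2)
  have hη : 0 < η := by positivity
  obtain ⟨δ, hδ, hδη⟩ : ∃ δ > 0, ∀ g ∈ U, dist (S g) 1 < δ → dist g 1 < η := by
    obtain ⟨W, hW, hWη⟩ := mem_comap.1 (mem_inf_principal.1 (hSU (ball_mem_nhds 1 hη)))
    obtain ⟨δ, hδ, hδW⟩ := Metric.mem_nhds_iff.1 hW
    exact ⟨δ, hδ, fun g hg hSg => hWη (hδW hSg) hg⟩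
  obtain ⟨N₁, hN₁⟩ := Metric.cauchySeq_iff.1 hSz δ hδ
  obtain ⟨N₂, hN₂⟩ := eventually_atTop.1 (hz.eventually (gt_mem_nhds hη))
  set N := max N₁ N₂
  have hgap : ∀ n ≥ N, dist (z n) (z N) < 2 * η → dist (z n) (z N) < η := by
    intro n hn hn2
    have hmem : z n / z N ∈ U := hrU <| by
      rw [mem_ball, dist_div_one]; linarith [min_le_right ε (r / 2)]
    rw [← dist_div_one]
    refine hδη _ hmem ?_
    rw [map_div, dist_div_one]
    exact hN₁ _ (le_of_max_le_left hn) _ (le_max_left _ _)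
  exact ⟨N, fun n hn => (dist_lt_of_dist_succ_lt_of_gap
    (fun n hn => hN₂ n (le_of_max_le_right hn)) hgap n hn).trans_le (min_le_left _ _)⟩

theorem partialProd_succ {M : Type*} [Monoid M] (x : ℕ → M) (n : ℕ) :
    partialProd x (n + 1) = partialProd x n * x (n + 1) :=
  List.prod_range_succ x (n + 1)

theorem map_partialProd {M N : Type*} [Monoid M] [Monoid N] (S : M →* N) (x : ℕ → M) (n : ℕ) :
    partialProd (fun p => S (x p)) n = S (partialProd x n) := by
  rw [partialProd, partialProd, map_list_prod, List.map_map]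
  rfl

theorem dist_partialProd_mul_inv_succ {G : Type*} [Group G] [PseudoMetricSpace G]
    [IsIsometricSMul G G] [IsIsometricSMul Gᵐᵒᵖ G] (x y : ℕ → G) (n : ℕ) :
    dist (partialProd x (n + 1) * (partialProd y (n + 1))⁻¹)
      (partialProd x n * (partialProd y n)⁻¹) = dist (x (n + 1) * (y (n + 1))⁻¹) 1 := by
  calc _ = dist (partialProd x n * (x (n + 1) * (y (n + 1))⁻¹) * (partialProd y n)⁻¹)
        (partialProd x n * 1 * (partialProd y n)⁻¹) := by
        simp only [partialProd_succ, mul_inv_rev, mul_one, mul_assoc]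
    _ = _ := by rw [dist_mul_right, dist_mul_left]

theorem stmt_11_general (G H : Type*) [Group G] [TopologicalSpace G]
    [PolishSpace G] [Group H] [TopologicalSpace H]
    (hG : IsTSI G) (hH : IsTSI H)
    (S : G →* H) (hS : Continuous S)
    (U : Set G) (hUopen : IsOpen U) (hU1 : (1 : G) ∈ U)
    (hemb : IsEmbedding (fun x : U => S x)) :
    ∀ x y : ℕ → G, Tendsto (fun p => x p * (y p)⁻¹) atTop (𝓝 1) →
      ((∃ l : G, Tendsto (fun n => partialProd x n * (partialProd y n)⁻¹) atTop (𝓝 l)) ↔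
       (∃ l : H, Tendsto
          (fun n => partialProd (fun p => S (x p)) n * (partialProd (fun p => S (y p)) n)⁻¹)
          atTop (𝓝 l))) := by
  obtain ⟨mG, rfl, hGl, hGr⟩ := hG
  obtain ⟨mH, rfl, -, hHr⟩ := hH
  have : IsIsometricSMul G G := ⟨fun g => Isometry.of_dist_eq (hGl g)⟩
  have : IsIsometricSMul Gᵐᵒᵖ G := ⟨fun g => Isometry.of_dist_eq (hGr g.unop)⟩
  have : IsIsometricSMul Hᵐᵒᵖ H := ⟨fun g => Isometry.of_dist_eq (hHr g.unop)⟩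
  have : CompleteSpace G := completeSpace_of_isIsometricSMul
  intro x y hxy
  simp only [map_partialProd, ← map_inv, ← map_mul]
  constructor
  · rintro ⟨l, hl⟩
    exact ⟨S l, (hS.tendsto l).comp hl⟩
  · rintro ⟨l, hl⟩
    have hsteps := (tendsto_add_atTop_iff_nat 1).2 (tendsto_iff_dist_tendsto_zero.1 hxy)
    simp only [← dist_partialProd_mul_inv_succ] at hsteps
    have hSU := (comap_nhds_inf_principal_eq_nhdsWithin hemb hU1).trans_le nhdsWithin_le_nhds
    rw [map_one] at hSU
    exact cauchySeq_tendsto_of_complete <|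
      cauchySeq_of_cauchySeq_map S (hUopen.mem_nhds hU1) hSU hsteps hl.cauchySeq

/-- Let `G, H` be TSI Polish groups, `S : G → H` a continuous homomorphism and `U` an open
neighborhood of `1_G` on which `S` restricts to a homeomorphism onto its image. Then for
all `x, y ∈ G^ω` with `x(p)·y(p)⁻¹ → 1`, the sequence `(x(0)⋯x(n)·y(n)⁻¹⋯y(0)⁻¹)_n`
converges in `G` iff `(S(x(0))⋯S(x(n))·S(y(n))⁻¹⋯S(y(0))⁻¹)_n` converges in `H`. -/
theorem stmt_11 (G H : Type*) [Group G] [TopologicalSpace G] [IsTopologicalGroup G]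
    [PolishSpace G] [Group H] [TopologicalSpace H] [IsTopologicalGroup H] [PolishSpace H]
    (hG : IsTSI G) (hH : IsTSI H)
    (S : G →* H) (hS : Continuous S)
    (U : Set G) (hUopen : IsOpen U) (hU1 : (1 : G) ∈ U)
    (hemb : IsEmbedding (fun x : U => S x)) :
    ∀ x y : ℕ → G, Tendsto (fun p => x p * (y p)⁻¹) atTop (𝓝 1) →
      ((∃ l : G, Tendsto (fun n => partialProd x n * (partialProd y n)⁻¹) atTop (𝓝 l)) ↔
       (∃ l : H, Tendsto
          (fun n => partialProd (fun p => S (x p)) n * (partialProd (fun p => S (y p)) n)⁻¹)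
          atTop (𝓝 l))) :=
  stmt_11_general G H hG hH S hS U hUopen hU1 hemb
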